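/- arXiv:1803.02184 — 7 statements merged into one kernel-verified Lean document; each statement's English description precedes it below -/
import Mathlib

section
/- If F is an almost product structure on a manifold (i.e. an endomorphism of the tangent bundle with F² = I), then J := (p/2)·I + ((2σ_{p,q} − p)/2)·F satisfies J² = p·J + q·I, i.e. J is a metallic structure. -/
/-- If `F` is an almost product structure (`F² = id`), then
`J = (p/2)·I + ((2σ − p)/2)·F` is a metallic structure: `J² = p·J + q·I`. -/
theorem almost_product_induces_metallic {V : Type*} [AddCommGroup V] [Module ℝ V]
    (p q : ℝ) (hp : 0 < p) (hq : 0 < q)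
    (F : V →ₗ[ℝ] V) (hF : F ∘ₗ F = LinearMap.id)
    (σ : ℝ) (hσ : σ = (p + Real.sqrt (p ^ 2 + 4 * q)) / 2)
    (J : V →ₗ[ℝ] V)
    (hJ : J = (p / 2) • (LinearMap.id : V →ₗ[ℝ] V) + ((2 * σ - p) / 2) • F) :
    J ∘ₗ J = p • J + q • (LinearMap.id : V →ₗ[ℝ] V) := by
  have hs : (2 * σ - p) ^ 2 = p ^ 2 + 4 * q := by
    have h : 2 * σ - p = Real.sqrt (p ^ 2 + 4 * q) := by rw [hσ]; ring
    rw [h, Real.sq_sqrt]; nlinarith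
  ext x
  have hFF : F (F x) = x := congrArg (· x) hF
  simp [hJ, map_add, map_smul, hFF, smul_smul, smul_add]
  match_scalars <;> nlinarith [hs]
end

section
/- For a submanifold M of a metallic Riemannian manifold (M̄, ḡ, J), the induced tensor P satisfies P²X = p·PX + q·X − Σ_α u_α(X)·ξ_α for all tangent vectors X. -/
open scoped InnerProductSpace

/-- For a submanifold (here: a subspace `T` of the ambient inner product space, pointwise)
of a metallic Riemannian manifold, the induced tensor `P` satisfies
`P²X = p·PX + q·X − Σ_α u_α(X)·ξ_α`. -/
theorem induced_P_squared
    {V : Type*} [NormedAddCommGroup V] [InnerProductSpace ℝ V]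
    (p q : ℝ) (hp : 0 < p) (hq : 0 < q)
    (J : V →ₗ[ℝ] V)
    (hJ2 : ∀ v, J (J v) = p • J v + q • v)
    (hJsym : ∀ v w, ⟪J v, w⟫_ℝ = ⟪v, J w⟫_ℝ)
    (r : ℕ) (T : Submodule ℝ V) (N : Fin r → V)
    (hON : Orthonormal ℝ N) (hNperp : ∀ α, N α ∈ Tᗮ)
    (P : V → V) (u : Fin r → V → ℝ) (ξ : Fin r → V) (a : Fin r → Fin r → ℝ)
    (hPT : ∀ x ∈ T, P x ∈ T)
    (hdecT : ∀ x ∈ T, J x = P x + ∑ α, u α x • N α)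
    (hξT : ∀ α, ξ α ∈ T)
    (hdecN : ∀ α, J (N α) = ξ α + ∑ β, a α β • N β) :
    ∀ x ∈ T, P (P x) = p • P x + q • x - ∑ α, u α x • ξ α := by
  intro x hx
  have hPx := hPT x hx
  have hPPx := hPT _ hPx
  -- two expansions of J (J x)
  have hE : P (P x) + ∑ β, u β (P x) • N β
      + ((∑ α, u α x • ξ α) + ∑ α, u α x • (∑ β, a α β • N β))
      = p • P x + p • (∑ α, u α x • N α) + q • x := by
    have h1 := hJ2 x
    rw [hdecT x hx] at h1
    rw [map_add, map_sum, hdecT (P x) hPx] at h1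
    simp only [map_smul, hdecN, smul_add, Finset.sum_add_distrib, smul_add] at h1
    linear_combination (norm := module) h1
  set A : V := P (P x) + (∑ α, u α x • ξ α) - (p • P x + q • x) with hA
  have hAT : A ∈ T := by
    refine Submodule.sub_mem _ ?_ ?_
    · exact Submodule.add_mem _ hPPx
        (Submodule.sum_mem _ fun α _ => Submodule.smul_mem _ _ (hξT α))
    · exact Submodule.add_mem _ (Submodule.smul_mem _ _ hPx) (Submodule.smul_mem _ _ hx)
  have hAperp : A ∈ Tᗮ := by
    have key : A = p • (∑ α, u α x • N α) - (∑ β, u β (P x) • N β)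
        - ∑ α, u α x • (∑ β, a α β • N β) := by
      rw [hA]
      linear_combination (norm := module) hE
    rw [key]
    refine Submodule.sub_mem _ (Submodule.sub_mem _ ?_ ?_) ?_
    · exact Submodule.smul_mem _ _
        (Submodule.sum_mem _ fun α _ => Submodule.smul_mem _ _ (hNperp α))
    · exact Submodule.sum_mem _ fun α _ => Submodule.smul_mem _ _ (hNperp α)
    · exact Submodule.sum_mem _ fun α _ => Submodule.smul_mem _ _
        (Submodule.sum_mem _ fun β _ => Submodule.smul_mem _ _ (hNperp β))
  have hA0 : A = 0 := by
    have := (Submodule.mem_orthogonal T A).mp hAperp A hAT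
    simpa [inner_self_eq_zero] using this
  have h0 : P (P x) + (∑ α, u α x • ξ α) = p • P x + q • x := by
    rw [← sub_eq_zero]
    simpa [hA, sub_sub] using hA0
  rw [eq_sub_iff_add_eq]
  linear_combination (norm := module) h0
end

section
/- For the structure induced on a submanifold of a metallic Riemannian manifold: u_β(ξ_α) = q·δ_{αβ} + p·a_{αβ} − Σ_γ a_{αγ} a_{γβ}, and P ξ_α = p·ξ_α − Σ_β a_{αβ} ξ_β. -/
open scoped InnerProductSpace

/-- For the structure induced on a submanifold of a metallic Riemannian manifold:
`u_β(ξ_α) = q·δ_{αβ} + p·a_{αβ} − Σ_γ a_{αγ}a_{γβ}` and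
`P ξ_α = p·ξ_α − Σ_β a_{αβ} ξ_β`. -/
theorem induced_u_of_xi_and_P_of_xi
    {V : Type*} [NormedAddCommGroup V] [InnerProductSpace ℝ V]
    (p q : ℝ) (hp : 0 < p) (hq : 0 < q)
    (J : V →ₗ[ℝ] V)
    (hJ2 : ∀ v, J (J v) = p • J v + q • v)
    (hJsym : ∀ v w, ⟪J v, w⟫_ℝ = ⟪v, J w⟫_ℝ)
    (r : ℕ) (T : Submodule ℝ V) (N : Fin r → V)
    (hON : Orthonormal ℝ N) (hNperp : ∀ α, N α ∈ Tᗮ)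
    (P : V → V) (u : Fin r → V → ℝ) (ξ : Fin r → V) (a : Fin r → Fin r → ℝ)
    (hPT : ∀ x ∈ T, P x ∈ T)
    (hdecT : ∀ x ∈ T, J x = P x + ∑ α, u α x • N α)
    (hξT : ∀ α, ξ α ∈ T)
    (hdecN : ∀ α, J (N α) = ξ α + ∑ β, a α β • N β) :
    (∀ α β, u β (ξ α) = q * (if α = β then 1 else 0) + p * a α β - ∑ γ, a α γ * a γ β) ∧
      ∀ α, P (ξ α) = p • ξ α - ∑ β, a α β • ξ β := by
  have hTN : ∀ x ∈ T, ∀ α, ⟪x, N α⟫_ℝ = 0 := fun x hx α =>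
    (Submodule.mem_orthogonal T (N α)).mp (hNperp α) x hx
  have hNN : ∀ α β, ⟪N α, N β⟫_ℝ = if α = β then 1 else 0 :=
    orthonormal_iff_ite.mp hON
  -- main equation per α
  have key : ∀ α, (p • ξ α - P (ξ α) - ∑ β, a α β • ξ β)
      = ∑ β, (u β (ξ α) + (∑ γ, a α γ * a γ β) - p * a α β) • N β - q • N α := by
    intro α
    have h1 := hJ2 (N α)
    rw [hdecN α, map_add, hdecT (ξ α) (hξT α), map_sum] at h1
    simp_rw [map_smul, hdecN] at h1
    have e1 : ∑ β, a α β • (ξ β + ∑ γ, a β γ • N γ)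
        = (∑ β, a α β • ξ β) + ∑ β, (∑ γ, a α γ * a γ β) • N β := by
      simp_rw [smul_add, Finset.smul_sum, smul_smul, Finset.sum_add_distrib]
      rw [Finset.sum_comm (f := fun β γ => (a α β * a β γ) • N γ)]
      simp_rw [← Finset.sum_smul]
    rw [e1, smul_add] at h1
    have e2 : ∑ β, (u β (ξ α) + (∑ γ, a α γ * a γ β) - p * a α β) • N β
        = ((∑ β, u β (ξ α) • N β) + ∑ β, (∑ γ, a α γ * a γ β) • N β)
          - ∑ β, (p * a α β) • N β := by
      simp [sub_smul, add_smul, Finset.sum_sub_distrib, Finset.sum_add_distrib]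
    have e3 : p • ∑ β, a α β • N β = ∑ β, (p * a α β) • N β := by
      rw [Finset.smul_sum]; simp [smul_smul]
    rw [e3] at h1
    rw [e2]
    linear_combination (norm := abel) -h1
  have hzero : ∀ α, (p • ξ α - P (ξ α) - ∑ β, a α β • ξ β) = 0 := by
    intro α
    have hT : (p • ξ α - P (ξ α) - ∑ β, a α β • ξ β) ∈ T := by
      refine sub_mem (sub_mem (T.smul_mem _ (hξT α)) (hPT _ (hξT α))) ?_
      exact Submodule.sum_mem _ fun β _ => T.smul_mem _ (hξT β)
    have hinner : ⟪p • ξ α - P (ξ α) - ∑ β, a α β • ξ β,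
        p • ξ α - P (ξ α) - ∑ β, a α β • ξ β⟫_ℝ = 0 := by
      nth_rewrite 2 [key α]
      rw [inner_sub_right, inner_sum]
      simp [real_inner_smul_right, hTN _ hT]
    exact inner_self_eq_zero.mp hinner
  refine ⟨fun α β => ?_, fun α => ?_⟩
  · have h0 : (0 : V) = ∑ γ, (u γ (ξ α) + (∑ δ, a α δ * a δ γ) - p * a α γ) • N γ - q • N α := by
      rw [← key α, hzero α]
    have h2 := congrArg (fun v => ⟪N β, v⟫_ℝ) h0
    simp only [inner_zero_right, inner_sub_right, inner_sum, real_inner_smul_right, hNN,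
      mul_ite, mul_one, mul_zero] at h2
    rw [Finset.sum_ite_eq] at h2
    simp only [Finset.mem_univ, if_true] at h2
    rcases eq_or_ne α β with h | h
    · subst h; simp only [if_pos rfl, ite_true] at h2 ⊢; linarith
    · rw [if_neg (Ne.symm h)] at h2; rw [if_neg h]; linarith
  · have h := hzero α
    have h' : p • ξ α - ∑ β, a α β • ξ β - P (ξ α) = 0 := by
      rw [← h]; abel
    rw [sub_eq_zero] at h'
    exact h'.symm
end

section
/- If M is a submanifold of a locally metallic Riemannian manifold (∇̄J = 0), then the induced tensor P satisfies the Codazzi-type identity (∇_X P)(Y) = Σ_α h_α(X,Y)·ξ_α + Σ_α u_α(Y)·A_α X for all tangent vector fields X, Y. -/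
/-!
Differentiate `J (ι Y) = ι (P Y) + Σ_α u_α(Y) N_α` along `X` and compare tangential components.
On the left, `∇̄J = 0` and the Gauss formula give `J (ι (∇_X Y) + Σ_α h_α(X,Y) N_α)`, whose tangential
part is `P (∇_X Y) + Σ_α h_α(X,Y) ξ_α`. On the right, the Leibniz rule with the Gauss and Weingarten
formulas gives the tangential part `∇_X (P Y) - Σ_α u_α(Y) A_α X`; the derivatives of the
coefficients `u_α(Y)` only contribute normal components.
-/

section

variable {R : Type*} [CommRing R] {T W : Type*} [AddCommGroup T] [Module R T]
  [AddCommGroup W] [Module R W] {κ : Type*} [Fintype κ]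

theorem proj_nabbar_tangent_add_normal (ι : T →ₗ[R] W) (π : W →ₗ[R] T) (hπι : ∀ x, π (ι x) = x)
    (N : κ → W) (hπN : ∀ α, π (N α) = 0) (D : T → R → R) (nabbar : T → W → W) (nab : T → T → T)
    (hadd : ∀ X v w, nabbar X (v + w) = nabbar X v + nabbar X w)
    (hLeib : ∀ X (f : R) v, nabbar X (f • v) = D X f • v + f • nabbar X v)
    (h : κ → T → T → R) (A : κ → T → T) (l : κ → κ → T → R)
    (hGauss : ∀ X Y, nabbar X (ι Y) = ι (nab X Y) + ∑ α, h α X Y • N α)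
    (hWein : ∀ X α, nabbar X (N α) = - ι (A α X) + ∑ β, l α β X • N β)
    (X Z : T) (f : κ → R) :
    π (nabbar X (ι Z + ∑ α, f α • N α)) = nab X Z - ∑ α, f α • A α X := by
  have nabbar_sum : nabbar X (∑ α, f α • N α) = ∑ α, nabbar X (f α • N α) :=
    map_sum (AddMonoidHom.mk' (nabbar X) (hadd X)) _ _
  rw [hadd, nabbar_sum]
  simp [hLeib, hGauss, hWein, hπι, hπN, sub_eq_add_neg]

theorem proj_nabbar_J_of_parallel (ι : T →ₗ[R] W) (π : W →ₗ[R] T) (hπι : ∀ x, π (ι x) = x)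
    (N : κ → W) (hπN : ∀ α, π (N α) = 0) (J : W →ₗ[R] W) (nabbar : T → W → W) (nab : T → T → T)
    (hJpar : ∀ X v, nabbar X (J v) = J (nabbar X v))
    (h : κ → T → T → R) (hGauss : ∀ X Y, nabbar X (ι Y) = ι (nab X Y) + ∑ α, h α X Y • N α)
    (P : T → T) (u : κ → T → R) (ξ : κ → T) (a : κ → κ → R)
    (hdecT : ∀ X, J (ι X) = ι (P X) + ∑ α, u α X • N α)
    (hdecN : ∀ α, J (N α) = ι (ξ α) + ∑ β, a α β • N β) (X Y : T) :
    π (nabbar X (J (ι Y))) = P (nab X Y) + ∑ α, h α X Y • ξ α := by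
  rw [hJpar, hGauss, map_add, hdecT, map_sum]
  simp [hdecN, hπι, hπN]

end

theorem induced_P_codazzi_general
    {R : Type*} [CommRing R] [Algebra ℝ R]
    {T W : Type*} [AddCommGroup T] [Module R T] [AddCommGroup W] [Module R W]
    -- the immersion of tangent fields into ambient fields along M, and the tangential projection
    (ι : T →ₗ[R] W) (π : W →ₗ[R] T) (hπι : ∀ x, π (ι x) = x)
    -- the ambient metric, the metallic structure J and its compatibility with the metric
    (J : W →ₗ[R] W)
    -- an orthonormal normal frame
    (r : ℕ) (N : Fin r → W)
    (hπN : ∀ α, π (N α) = 0)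
    -- vector fields act on functions as derivations; ambient and induced connections
    (D : T → Derivation ℝ R R)
    (nabbar : T → W → W) (nab : T → T → T)
    (hadd : ∀ X v w, nabbar X (v + w) = nabbar X v + nabbar X w)
    (hLeib : ∀ X (f : R) v, nabbar X (f • v) = D X f • v + f • nabbar X v)
    -- J is parallel: the ambient manifold is locally metallic
    (hJpar : ∀ X v, nabbar X (J v) = J (nabbar X v))
    -- Gauss and Weingarten formulas
    (h : Fin r → T → T → R) (A : Fin r → T → T) (l : Fin r → Fin r → T → R)
    (hGauss : ∀ X Y, nabbar X (ι Y) = ι (nab X Y) + ∑ α, h α X Y • N α)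
    (hWein : ∀ X α, nabbar X (N α) = - ι (A α X) + ∑ β, l α β X • N β)
    -- the induced Σ-structure
    (P : T → T) (u : Fin r → T → R) (ξ : Fin r → T) (a : Fin r → Fin r → R)
    (hdecT : ∀ X, J (ι X) = ι (P X) + ∑ α, u α X • N α)
    (hdecN : ∀ α, J (N α) = ι (ξ α) + ∑ β, a α β • N β) :
    ∀ X Y, nab X (P Y) - P (nab X Y) = ∑ α, h α X Y • ξ α + ∑ α, u α Y • A α X := by
  intro X Y
  have via_parallel := proj_nabbar_J_of_parallel ι π hπι N hπN J nabbar nab hJpar h hGauss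
    P u ξ a hdecT hdecN X Y
  have via_leibniz : π (nabbar X (J (ι Y))) = nab X (P Y) - ∑ α, u α Y • A α X := by
    rw [hdecT]
    exact proj_nabbar_tangent_add_normal ι π hπι N hπN (fun X f => D X f) nabbar nab hadd hLeib
      h A l hGauss hWein X (P Y) (u · Y)
  linear_combination (norm := module) via_parallel - via_leibniz

/-- Codazzi-type identity: on a submanifold of a locally metallic Riemannian manifold
(`∇̄J = 0`), the induced tensor `P` satisfies
`(∇_X P)(Y) = Σ_α h_α(X,Y)·ξ_α + Σ_α u_α(Y)·A_α X`. -/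
theorem induced_P_codazzi
    {R : Type*} [CommRing R] [Algebra ℝ R]
    {T W : Type*} [AddCommGroup T] [Module R T] [AddCommGroup W] [Module R W]
    (p q : ℝ) (hp : 0 < p) (hq : 0 < q)
    -- the immersion of tangent fields into ambient fields along M, and the tangential projection
    (ι : T →ₗ[R] W) (π : W →ₗ[R] T) (hπι : ∀ x, π (ι x) = x)
    -- the ambient metric, the metallic structure J and its compatibility with the metric
    (gbar : W →ₗ[R] W →ₗ[R] R) (hgsym : ∀ v w, gbar v w = gbar w v)
    (J : W →ₗ[R] W)
    (hJ2 : ∀ v, J (J v) = algebraMap ℝ R p • J v + algebraMap ℝ R q • v)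
    (hJcompat : ∀ v w, gbar (J v) w = gbar v (J w))
    -- an orthonormal normal frame
    (r : ℕ) (N : Fin r → W)
    (hON : ∀ α β, gbar (N α) (N β) = if α = β then 1 else 0)
    (hNperp : ∀ α x, gbar (N α) (ι x) = 0)
    (hπN : ∀ α, π (N α) = 0)
    -- vector fields act on functions as derivations; ambient and induced connections
    (D : T → Derivation ℝ R R)
    (nabbar : T → W → W) (nab : T → T → T)
    (hadd : ∀ X v w, nabbar X (v + w) = nabbar X v + nabbar X w)
    (hLeib : ∀ X (f : R) v, nabbar X (f • v) = D X f • v + f • nabbar X v)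
    -- J is parallel: the ambient manifold is locally metallic
    (hJpar : ∀ X v, nabbar X (J v) = J (nabbar X v))
    -- Gauss and Weingarten formulas
    (h : Fin r → T → T → R) (A : Fin r → T → T) (l : Fin r → Fin r → T → R)
    (hGauss : ∀ X Y, nabbar X (ι Y) = ι (nab X Y) + ∑ α, h α X Y • N α)
    (hWein : ∀ X α, nabbar X (N α) = - ι (A α X) + ∑ β, l α β X • N β)
    -- the induced Σ-structure
    (P : T → T) (u : Fin r → T → R) (ξ : Fin r → T) (a : Fin r → Fin r → R)
    (hdecT : ∀ X, J (ι X) = ι (P X) + ∑ α, u α X • N α)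
    (hdecN : ∀ α, J (N α) = ι (ξ α) + ∑ β, a α β • N β) :
    ∀ X Y, nab X (P Y) - P (nab X Y) = ∑ α, h α X Y • ξ α + ∑ α, u α Y • A α X :=
  induced_P_codazzi_general ι π hπι J r N hπN D nabbar nab hadd hLeib hJpar h A l hGauss hWein P u ξ
    a hdecT hdecN
end

section
/- If M is a submanifold of a locally metallic Riemannian manifold, then ∇_X ξ_α = −P(A_α X) + Σ_β a_{αβ} A_β X + Σ_β l_{αβ}(X) ξ_β for all tangent X. -/
/-!
Apply the parallelism `∇̄_X (J N_α) = J (∇̄_X N_α)` and take tangential parts. On the left,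
`J N_α = ξ_α + Σ_β a_{αβ} N_β`, and the Gauss and Weingarten formulas give the tangential part
`∇_X ξ_α - Σ_β a_{αβ} A_β X` (the derivatives of the coefficients `a_{αβ}` only produce normal
terms). On the right, `∇̄_X N_α = -A_α X + Σ_β l_{αβ}(X) N_β`, whose image under `J` has
tangential part `-P(A_α X) + Σ_β l_{αβ}(X) ξ_β`.
-/

open Finset

section Submanifold

variable {R : Type*} [CommRing R] {T W : Type*} [AddCommGroup T] [Module R T]
  [AddCommGroup W] [Module R W] {κ : Type*} [Fintype κ]
  (ι : T →ₗ[R] W) (π : W →ₗ[R] T) (N : κ → W)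

lemma tangential_part_add_normal (hπι : ∀ x, π (ι x) = x) (hπN : ∀ α, π (N α) = 0)
    (x : T) (c : κ → R) : π (ι x + ∑ β, c β • N β) = x := by
  simp [hπι, hπN]

lemma tangential_part_weingarten (hπι : ∀ x, π (ι x) = x) (hπN : ∀ α, π (N α) = 0)
    (x : T) (c : κ → R) : π (-ι x + ∑ β, c β • N β) = -x := by
  rw [← map_neg, tangential_part_add_normal ι π N hπι hπN]

variable [Algebra ℝ R] (D : T → Derivation ℝ R R) (nabbar : T → W → W) (A : κ → T → T)
  (l : κ → κ → T → R)

lemma tangential_part_nabbar_smul_normal (hπι : ∀ x, π (ι x) = x) (hπN : ∀ α, π (N α) = 0)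
    (hLeib : ∀ X (f : R) v, nabbar X (f • v) = D X f • v + f • nabbar X v)
    (hWein : ∀ X α, nabbar X (N α) = -ι (A α X) + ∑ β, l α β X • N β)
    (X : T) (f : R) (β : κ) : π (nabbar X (f • N β)) = -(f • A β X) := by
  rw [hLeib, hWein, map_add, map_smul, map_smul, hπN,
    tangential_part_weingarten ι π N hπι hπN, smul_zero, zero_add, smul_neg]

end Submanifold

theorem induced_xi_derivative_general
    {R : Type*} [CommRing R] [Algebra ℝ R]
    {T W : Type*} [AddCommGroup T] [Module R T] [AddCommGroup W] [Module R W]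
    -- the immersion of tangent fields into ambient fields along M, and the tangential projection
    (ι : T →ₗ[R] W) (π : W →ₗ[R] T) (hπι : ∀ x, π (ι x) = x)
    -- the ambient metric, the metallic structure J and its compatibility with the metric
    (J : W →ₗ[R] W)
    -- an orthonormal normal frame
    (r : ℕ) (N : Fin r → W)
    (hπN : ∀ α, π (N α) = 0)
    -- vector fields act on functions as derivations; ambient and induced connections
    (D : T → Derivation ℝ R R)
    (nabbar : T → W → W) (nab : T → T → T)
    (hadd : ∀ X v w, nabbar X (v + w) = nabbar X v + nabbar X w)
    (hLeib : ∀ X (f : R) v, nabbar X (f • v) = D X f • v + f • nabbar X v)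
    -- J is parallel: the ambient manifold is locally metallic
    (hJpar : ∀ X v, nabbar X (J v) = J (nabbar X v))
    -- Gauss and Weingarten formulas
    (h : Fin r → T → T → R) (A : Fin r → T → T) (l : Fin r → Fin r → T → R)
    (hGauss : ∀ X Y, nabbar X (ι Y) = ι (nab X Y) + ∑ α, h α X Y • N α)
    (hWein : ∀ X α, nabbar X (N α) = - ι (A α X) + ∑ β, l α β X • N β)
    -- the induced Σ-structure
    (P : T → T) (u : Fin r → T → R) (ξ : Fin r → T) (a : Fin r → Fin r → R)
    (hdecT : ∀ X, J (ι X) = ι (P X) + ∑ α, u α X • N α)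
    (hdecN : ∀ α, J (N α) = ι (ξ α) + ∑ β, a α β • N β) :
    ∀ X α, nab X (ξ α) = - P (A α X) + ∑ β, a α β • A β X + ∑ β, l α β X • ξ β := by
  intro X α
  have htan : π (nabbar X (J (N α))) = nab X (ξ α) - ∑ β, a α β • A β X := by
    have hsum : nabbar X (∑ β, a α β • N β) = ∑ β, nabbar X (a α β • N β) :=
      map_sum (AddMonoidHom.mk' (nabbar X) (hadd X)) _ _
    rw [hdecN, hadd, hsum, map_add, hGauss, tangential_part_add_normal ι π N hπι hπN, map_sum]
    simp only [tangential_part_nabbar_smul_normal ι π N D nabbar A l hπι hπN hLeib hWein,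
      sum_neg_distrib, sub_eq_add_neg]
  have hJtan : π (J (nabbar X (N α))) = -P (A α X) + ∑ β, l α β X • ξ β := by
    simp only [hWein, map_add, map_neg, map_sum, map_smul, hdecT, hdecN,
      tangential_part_add_normal ι π N hπι hπN]
  have hpar := congrArg π (hJpar X (N α))
  rw [htan, hJtan, sub_eq_iff_eq_add] at hpar
  rw [hpar]
  abel

/-- On a submanifold of a locally metallic Riemannian manifold (`∇̄J = 0`),
`∇_X ξ_α = −P(A_α X) + Σ_β a_{αβ} A_β X + Σ_β l_{αβ}(X) ξ_β`. -/
theorem induced_xi_derivative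
    {R : Type*} [CommRing R] [Algebra ℝ R]
    {T W : Type*} [AddCommGroup T] [Module R T] [AddCommGroup W] [Module R W]
    (p q : ℝ) (hp : 0 < p) (hq : 0 < q)
    -- the immersion of tangent fields into ambient fields along M, and the tangential projection
    (ι : T →ₗ[R] W) (π : W →ₗ[R] T) (hπι : ∀ x, π (ι x) = x)
    -- the ambient metric, the metallic structure J and its compatibility with the metric
    (gbar : W →ₗ[R] W →ₗ[R] R) (hgsym : ∀ v w, gbar v w = gbar w v)
    (J : W →ₗ[R] W)
    (hJ2 : ∀ v, J (J v) = algebraMap ℝ R p • J v + algebraMap ℝ R q • v)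
    (hJcompat : ∀ v w, gbar (J v) w = gbar v (J w))
    -- an orthonormal normal frame
    (r : ℕ) (N : Fin r → W)
    (hON : ∀ α β, gbar (N α) (N β) = if α = β then 1 else 0)
    (hNperp : ∀ α x, gbar (N α) (ι x) = 0)
    (hπN : ∀ α, π (N α) = 0)
    -- vector fields act on functions as derivations; ambient and induced connections
    (D : T → Derivation ℝ R R)
    (nabbar : T → W → W) (nab : T → T → T)
    (hadd : ∀ X v w, nabbar X (v + w) = nabbar X v + nabbar X w)
    (hLeib : ∀ X (f : R) v, nabbar X (f • v) = D X f • v + f • nabbar X v)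
    -- J is parallel: the ambient manifold is locally metallic
    (hJpar : ∀ X v, nabbar X (J v) = J (nabbar X v))
    -- Gauss and Weingarten formulas
    (h : Fin r → T → T → R) (A : Fin r → T → T) (l : Fin r → Fin r → T → R)
    (hGauss : ∀ X Y, nabbar X (ι Y) = ι (nab X Y) + ∑ α, h α X Y • N α)
    (hWein : ∀ X α, nabbar X (N α) = - ι (A α X) + ∑ β, l α β X • N β)
    -- the induced Σ-structure
    (P : T → T) (u : Fin r → T → R) (ξ : Fin r → T) (a : Fin r → Fin r → R)
    (hdecT : ∀ X, J (ι X) = ι (P X) + ∑ α, u α X • N α)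
    (hdecN : ∀ α, J (N α) = ι (ξ α) + ∑ β, a α β • N β) :
    ∀ X α, nab X (ξ α) = - P (A α X) + ∑ β, a α β • A β X + ∑ β, l α β X • ξ β :=
  induced_xi_derivative_general ι π hπι J r N hπN D nabbar nab hadd hLeib hJpar h A l hGauss hWein P
    u ξ a hdecT hdecN
end

section
/- If M is an invariant submanifold (J maps tangent vectors to tangent vectors) of a locally metallic Riemannian manifold, then the induced tensor P is parallel: ∇P = 0. -/
/-!
Along an invariant submanifold the normal vectors `J N_α` have no tangential part: for tangent
`Y`, `ḡ(J N_α, ιY) = ḡ(N_α, ι(PY)) = 0`, so nondegeneracy of the induced metric kills `ξ_α`.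
Hence `J` maps normal fields to normal fields, and projecting `∇̄_X(ι(PY)) = J(∇̄_X ιY)` onto the
tangent bundle via the Gauss formula leaves exactly `∇_X(PY) = P(∇_X Y)`.
-/

section NormalFrame

variable {R : Type*} [CommRing R] {T W : Type*} [AddCommGroup T] [Module R T]
  [AddCommGroup W] [Module R W] {κ : Type*} [Fintype κ] (ι : T →ₗ[R] W) (N : κ → W)

theorem proj_add_sum_smul_normal (π : W →ₗ[R] T) (hπι : ∀ x, π (ι x) = x)
    (hπN : ∀ α, π (N α) = 0) (x : T) (c : κ → R) :
    π (ι x + ∑ β, c β • N β) = x := by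
  simp [hπι, hπN]

theorem bilin_add_sum_smul_normal (g : W →ₗ[R] W →ₗ[R] R) (hNperp : ∀ α x, g (N α) (ι x) = 0)
    (x y : T) (c : κ → R) :
    g (ι x + ∑ β, c β • N β) (ι y) = g (ι x) (ι y) := by
  simp [hNperp]

theorem tangentPart_eq_zero_of_invariant (g : W →ₗ[R] W →ₗ[R] R) (J : W →ₗ[R] W)
    (hJsymm : ∀ v w, g (J v) w = g v (J w)) (hNperp : ∀ α x, g (N α) (ι x) = 0)
    (hgnd : ∀ X : T, (∀ Y : T, g (ι X) (ι Y) = 0) → X = 0)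
    (P : T → T) (hinv : ∀ X, J (ι X) = ι (P X))
    (ξ : κ → T) (a : κ → κ → R) (hdecN : ∀ α, J (N α) = ι (ξ α) + ∑ β, a α β • N β) (α : κ) :
    ξ α = 0 :=
  hgnd (ξ α) fun Y => by
    rw [← bilin_add_sum_smul_normal ι N g hNperp _ _ (a α), ← hdecN, hJsymm, hinv, hNperp]

theorem nab_comp_eq_comp_nab_of_invariant (π : W →ₗ[R] T) (hπι : ∀ x, π (ι x) = x)
    (hπN : ∀ α, π (N α) = 0) (J : W →ₗ[R] W) (nabbar : T → W → W) (nab : T → T → T)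
    (hJpar : ∀ X v, nabbar X (J v) = J (nabbar X v))
    (h : κ → T → T → R) (hGauss : ∀ X Y, nabbar X (ι Y) = ι (nab X Y) + ∑ α, h α X Y • N α)
    (P : T → T) (hinv : ∀ X, J (ι X) = ι (P X))
    (a : κ → κ → R) (hJN : ∀ α, J (N α) = ∑ β, a α β • N β) (X Y : T) :
    nab X (P Y) = P (nab X Y) := by
  have hπJN : ∀ α, π (J (N α)) = 0 := fun α => by simp [hJN, hπN]
  calc nab X (P Y) = π (nabbar X (ι (P Y))) := by
        rw [hGauss, proj_add_sum_smul_normal ι N π hπι hπN]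
    _ = π (J (ι (nab X Y) + ∑ α, h α X Y • N α)) := by rw [← hinv, hJpar, hGauss]
    _ = P (nab X Y) := by simp [hinv, hπι, hπJN]

end NormalFrame

theorem invariant_submanifold_P_parallel_general
    {R : Type*} [CommRing R]
    {T W : Type*} [AddCommGroup T] [Module R T] [AddCommGroup W] [Module R W]
    -- the immersion of tangent fields into ambient fields along M, and the tangential projection
    (ι : T →ₗ[R] W) (π : W →ₗ[R] T) (hπι : ∀ x, π (ι x) = x)
    -- the ambient metric, the metallic structure J and its compatibility with the metric
    (gbar : W →ₗ[R] W →ₗ[R] R)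
    (J : W →ₗ[R] W)
    (hJcompat : ∀ v w, gbar (J v) w = gbar v (J w))
    -- an orthonormal normal frame
    (r : ℕ) (N : Fin r → W)
    (hNperp : ∀ α x, gbar (N α) (ι x) = 0)
    (hπN : ∀ α, π (N α) = 0)
    -- vector fields act on functions as derivations; ambient and induced connections
    (nabbar : T → W → W) (nab : T → T → T)
    -- J is parallel: the ambient manifold is locally metallic
    (hJpar : ∀ X v, nabbar X (J v) = J (nabbar X v))
    -- Gauss and Weingarten formulas
    (h : Fin r → T → T → R)
    (hGauss : ∀ X Y, nabbar X (ι Y) = ι (nab X Y) + ∑ α, h α X Y • N α)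
    -- the induced Σ-structure
    (P : T → T) (ξ : Fin r → T) (a : Fin r → Fin r → R)
    (hdecN : ∀ α, J (N α) = ι (ξ α) + ∑ β, a α β • N β)
    (hgnd : ∀ X : T, (∀ Y : T, gbar (ι X) (ι Y) = 0) → X = 0)
    (hinv : ∀ X, J (ι X) = ι (P X)) :
    ∀ X Y, nab X (P Y) = P (nab X Y) := by
  have hξ := tangentPart_eq_zero_of_invariant ι N gbar J hJcompat hNperp hgnd P hinv ξ a hdecN
  refine nab_comp_eq_comp_nab_of_invariant ι N π hπι hπN J nabbar nab hJpar h hGauss P hinv a ?_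
  intro α
  rw [hdecN, hξ, map_zero, zero_add]

/-- If `M` is an invariant submanifold (`J` maps tangent vectors to tangent vectors, i.e.
`J(ιX) = ι(PX)`) of a locally metallic Riemannian manifold, then the induced tensor `P` is
parallel: `∇P = 0`.  The induced metric `gbar(ι·, ι·)` is assumed nondegenerate. -/
theorem invariant_submanifold_P_parallel
    {R : Type*} [CommRing R] [Algebra ℝ R]
    {T W : Type*} [AddCommGroup T] [Module R T] [AddCommGroup W] [Module R W]
    (p q : ℝ) (hp : 0 < p) (hq : 0 < q)
    -- the immersion of tangent fields into ambient fields along M, and the tangential projection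
    (ι : T →ₗ[R] W) (π : W →ₗ[R] T) (hπι : ∀ x, π (ι x) = x)
    -- the ambient metric, the metallic structure J and its compatibility with the metric
    (gbar : W →ₗ[R] W →ₗ[R] R) (hgsym : ∀ v w, gbar v w = gbar w v)
    (J : W →ₗ[R] W)
    (hJ2 : ∀ v, J (J v) = algebraMap ℝ R p • J v + algebraMap ℝ R q • v)
    (hJcompat : ∀ v w, gbar (J v) w = gbar v (J w))
    -- an orthonormal normal frame
    (r : ℕ) (N : Fin r → W)
    (hON : ∀ α β, gbar (N α) (N β) = if α = β then 1 else 0)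
    (hNperp : ∀ α x, gbar (N α) (ι x) = 0)
    (hπN : ∀ α, π (N α) = 0)
    -- vector fields act on functions as derivations; ambient and induced connections
    (D : T → Derivation ℝ R R)
    (nabbar : T → W → W) (nab : T → T → T)
    (hadd : ∀ X v w, nabbar X (v + w) = nabbar X v + nabbar X w)
    (hLeib : ∀ X (f : R) v, nabbar X (f • v) = D X f • v + f • nabbar X v)
    -- J is parallel: the ambient manifold is locally metallic
    (hJpar : ∀ X v, nabbar X (J v) = J (nabbar X v))
    -- Gauss and Weingarten formulas
    (h : Fin r → T → T → R) (A : Fin r → T → T) (l : Fin r → Fin r → T → R)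
    (hGauss : ∀ X Y, nabbar X (ι Y) = ι (nab X Y) + ∑ α, h α X Y • N α)
    (hWein : ∀ X α, nabbar X (N α) = - ι (A α X) + ∑ β, l α β X • N β)
    -- the induced Σ-structure
    (P : T → T) (u : Fin r → T → R) (ξ : Fin r → T) (a : Fin r → Fin r → R)
    (hdecT : ∀ X, J (ι X) = ι (P X) + ∑ α, u α X • N α)
    (hdecN : ∀ α, J (N α) = ι (ξ α) + ∑ β, a α β • N β)
    (hgnd : ∀ X : T, (∀ Y : T, gbar (ι X) (ι Y) = 0) → X = 0)
    (hinv : ∀ X, J (ι X) = ι (P X)) :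
    ∀ X Y, nab X (P Y) = P (nab X Y) :=
  invariant_submanifold_P_parallel_general ι π hπι gbar J hJcompat r N hNperp hπN nabbar nab hJpar h
    hGauss P ξ a hdecN hgnd hinv
end

section
/- If M is a non-invariant submanifold of codimension r ≥ 2 in a locally metallic Riemannian manifold with vanishing normal connection, then the tangent vector fields ξ₁,…,ξ_r are linearly independent at every point. -/
open scoped InnerProductSpace

/-- If `M` is a non-invariant submanifold of codimension `r ≥ 2` in a locally metallic
Riemannian manifold with vanishing normal connection, then `ξ₁, …, ξ_r` are linearly
independent (pointwise: in the tangent inner product space).  The Gram matrix is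
`g(ξ_α, ξ_β) = qδ_{αβ} + p a_{αβ} − (A²)_{αβ}`, and non-invariance is encoded by
`det(qI + pA − A²) ≠ 0`. -/
theorem xi_linearly_independent
    {V : Type*} [NormedAddCommGroup V] [InnerProductSpace ℝ V]
    (r : ℕ) (hr : 2 ≤ r) (p q : ℝ) (hp : 0 < p) (hq : 0 < q)
    (a : Matrix (Fin r) (Fin r) ℝ) (hasym : a.IsSymm)
    (ξ : Fin r → V)
    (hGram : ∀ α β, ⟪ξ α, ξ β⟫_ℝ =
      q * (if α = β then 1 else 0) + p * a α β - (a * a) α β)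
    (hnoninv : (q • (1 : Matrix (Fin r) (Fin r) ℝ) + p • a - a * a).det ≠ 0) :
    LinearIndependent ℝ ξ := by
  set B : Matrix (Fin r) (Fin r) ℝ := q • (1 : Matrix (Fin r) (Fin r) ℝ) + p • a - a * a
    with hB
  have hBentry : ∀ α β, B α β = ⟪ξ α, ξ β⟫_ℝ := by
    intro α β
    rw [hGram]
    simp [hB, Matrix.one_apply, Matrix.smul_apply, Matrix.sub_apply, Matrix.add_apply]
  rw [Fintype.linearIndependent_iff]
  intro c hc
  have hmv : B.mulVec c = 0 := by
    funext β
    have : ⟪ξ β, ∑ i, c i • ξ i⟫_ℝ = 0 := by rw [hc]; simp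
    rw [inner_sum] at this
    simp only [real_inner_smul_right] at this
    calc B.mulVec c β = ∑ i, B β i * c i := by
          simp [Matrix.mulVec, dotProduct]
      _ = ∑ i, c i * ⟪ξ β, ξ i⟫_ℝ := by
          refine Finset.sum_congr rfl fun i _ => ?_
          rw [hBentry]; ring
      _ = 0 := this
  have := Matrix.eq_zero_of_mulVec_eq_zero hnoninv hmv
  exact fun i => congrFun this i
end
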